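/- Let r ≥ 2 be an integer. Then for every x ∈ [0,1], ∑_{k≥r} ( (r-1)/(k(k-1)) ) · g_k^r(x) = 1, where g_k^r(x) = ∑_{i=0}^{r-1} C(k,i) x^{k-i-1} (1-x)^i. (Note (p_k)_{k≥r} with p_k = (r-1)/(k(k-1)) is a probability mass function on the integers k ≥ r.) -/

import Mathlib

/-!
The series telescopes. Put `T_m = (1/m) ∑_{i<r} (r-1-i) C(m,i) x^(m-i-1) (1-x)^i`
(`gTail r m x`). Since `T` grows in `r` by `g_m^r / m`, induction on `r` reduces
`p_{m+1} g_{m+1}^r(x) = T_m - T_{m+1}` to the Pascal-rule identity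
`g_m^{r+1}(x) - g_{m+1}^{r+1}(x) = C(m,r) x^(m-r-1) (1-x)^(r+1)`. The binomial theorem gives
`T_{r-1} = 1` and `T_m ≤ ∑_{i<r} (r-1-i)/(m-i) → 0`, so the partial sums `1 - T_m` tend
to `1`.
-/

/-- The polynomial `g_k^r(x) = ∑_{i=0}^{r-1} C(k,i) x^(k-i-1) (1-x)^i`. -/
noncomputable def g (r k : ℕ) (x : ℝ) : ℝ :=
  ∑ i ∈ Finset.range r, (k.choose i : ℝ) * x ^ (k - i - 1) * (1 - x) ^ i

open Finset Filter Topology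

lemma cast_choose_mul_succ_eq (n : ℕ) {i : ℕ} (hi : i ≤ n + 1) :
    (n.choose i : ℝ) * (n + 1) = (n + 1).choose i * (n + 1 - i) := by
  have h := congrArg (Nat.cast (R := ℝ)) (Nat.choose_mul_succ_eq n i)
  push_cast [Nat.cast_sub hi] at h
  exact h

lemma pow_mul_pow_mul_choose_le_one {x : ℝ} (hx : x ∈ Set.Icc (0 : ℝ) 1) {n i : ℕ}
    (hi : i ≤ n) :
    (1 - x) ^ i * x ^ (n - i) * n.choose i ≤ 1 := by
  have hx0 := hx.1
  have h1x : 0 ≤ 1 - x := sub_nonneg.2 hx.2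
  calc (1 - x) ^ i * x ^ (n - i) * n.choose i
      ≤ ∑ j ∈ range (n + 1), (1 - x) ^ j * x ^ (n - j) * n.choose j :=
        single_le_sum (f := fun j => (1 - x) ^ j * x ^ (n - j) * n.choose j)
          (fun j _ => by positivity) (mem_range.2 (Nat.lt_succ_of_le hi))
    _ = 1 := by rw [← add_pow, sub_add_cancel, one_pow]

lemma g_succ_left (r k : ℕ) (x : ℝ) :
    g (r + 1) k x = g r k x + k.choose r * x ^ (k - r - 1) * (1 - x) ^ r :=
  sum_range_succ _ _

lemma g_nonneg {x : ℝ} (hx : x ∈ Set.Icc (0 : ℝ) 1) (r k : ℕ) : 0 ≤ g r k x := by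
  have hx0 := hx.1
  have h1x : 0 ≤ 1 - x := sub_nonneg.2 hx.2
  unfold g
  positivity

lemma g_sub_g_succ_right (x : ℝ) {r m : ℕ} (h : r < m) :
    g (r + 1) m x - g (r + 1) (m + 1) x = m.choose r * x ^ (m - r - 1) * (1 - x) ^ (r + 1) := by
  induction r with
  | zero =>
    obtain ⟨n, rfl⟩ := Nat.exists_eq_add_of_lt h
    simp only [g, zero_add, range_one, sum_singleton, Nat.choose_zero_right, Nat.cast_one,
      tsub_zero, add_tsub_cancel_right, one_mul, pow_zero, mul_one, pow_succ]
    ring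
  | succ r ih =>
    rw [g_succ_left (r + 1), g_succ_left (r + 1), Nat.choose_succ_succ' m r,
      show m + 1 - (r + 1) - 1 = m - (r + 1) - 1 + 1 by omega]
    have hdiff := ih (by omega)
    rw [show m - r - 1 = m - (r + 1) - 1 + 1 by omega] at hdiff
    push_cast
    linear_combination hdiff

lemma mul_g_sub_g_succ_right (x : ℝ) {r m : ℕ} (h : r ≤ m) :
    ((m : ℝ) + 1) * (g r m x - g r (m + 1) x) =
      r * (m + 1).choose r * x ^ (m + 1 - r - 1) * (1 - x) ^ r := by
  cases r with
  | zero => simp [g]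
  | succ s =>
    have habs := congrArg (Nat.cast (R := ℝ)) (Nat.add_one_mul_choose_eq m s)
    push_cast at habs
    rw [g_sub_g_succ_right x h, show m + 1 - (s + 1) - 1 = m - s - 1 by omega]
    push_cast
    linear_combination (x ^ (m - s - 1) * (1 - x) ^ (s + 1)) * habs

/-- The tail `∑_{k > m} p_k g_k^r(x)` of the series in closed form; probabilistically,
`m x · gTail r m x = 𝔼[(r - 1 - Bin(m, 1 - x))⁺]`. -/
noncomputable def gTail (r m : ℕ) (x : ℝ) : ℝ :=
  (∑ i ∈ range r, ((r : ℝ) - 1 - i) * m.choose i * x ^ (m - i - 1) * (1 - x) ^ i) / m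

lemma gTail_succ_left (r m : ℕ) (x : ℝ) : gTail (r + 1) m x = gTail r m x + g r m x / m := by
  rw [gTail, gTail, g, sum_range_succ, ← add_div, ← sum_add_distrib]
  push_cast
  rw [show (r : ℝ) + 1 - 1 - r = 0 by ring, zero_mul, zero_mul, zero_mul, add_zero]
  congr 1
  refine sum_congr rfl fun i _ => ?_
  ring

lemma gTail_sub_gTail_succ_right (x : ℝ) {r m : ℕ} (hm : 0 < m) (hr : r ≤ m + 1) :
    ((r : ℝ) - 1) / ((m + 1) * m) * g r (m + 1) x = gTail r m x - gTail r (m + 1) x := by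
  induction r with
  | zero => simp [g, gTail]
  | succ r ih =>
    have hdiff := mul_g_sub_g_succ_right x (Nat.le_of_succ_le_succ hr)
    rw [gTail_succ_left, gTail_succ_left, g_succ_left, ← sub_add_sub_comm, ← ih (by omega)]
    have hm' : (m : ℝ) ≠ 0 := by positivity
    push_cast
    field_simp
    linear_combination -hdiff

lemma gTail_pred_self {r : ℕ} (hr : 2 ≤ r) (x : ℝ) : gTail r (r - 1) x = 1 := by
  obtain ⟨n, rfl⟩ := Nat.exists_eq_add_of_le' hr
  have hterm : ∀ i ∈ range (n + 1), ((n + 2 : ℕ) - 1 - i : ℝ) * (n + 1).choose i *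
      x ^ (n + 1 - i - 1) * (1 - x) ^ i = (n + 1) * ((1 - x) ^ i * x ^ (n - i) * n.choose i) := by
    intro i hi
    rw [mem_range] at hi
    rw [show n + 1 - i - 1 = n - i by omega]
    push_cast
    linear_combination (x ^ (n - i) * (1 - x) ^ i) * (cast_choose_mul_succ_eq n hi.le).symm
  rw [gTail, show n + 2 - 1 = n + 1 by omega, sum_range_succ, sum_congr rfl hterm, ← mul_sum,
    ← add_pow, sub_add_cancel]
  push_cast
  field_simp
  ring

lemma sum_range_succ_eq_one_sub_gTail (x : ℝ) {r m : ℕ} (hr : 2 ≤ r) (hm : r - 1 ≤ m) :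
    ∑ k ∈ range (m + 1),
        (if r ≤ k then ((r : ℝ) - 1) / ((k : ℝ) * ((k : ℝ) - 1)) * g r k x else 0)
      = 1 - gTail r m x := by
  induction m, hm using Nat.le_induction with
  | base =>
    rw [show r - 1 + 1 = r by omega, gTail_pred_self hr, sub_self,
      sum_eq_zero fun k hk => if_neg (by rw [mem_range] at hk; omega)]
  | succ m hm ih =>
    have hstep := gTail_sub_gTail_succ_right x (r := r) (m := m) (by omega) (by omega)
    rw [sum_range_succ, ih, if_pos (by omega)]
    push_cast
    rw [add_sub_cancel_right]
    linear_combination hstep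

lemma gTail_nonneg {x : ℝ} (hx : x ∈ Set.Icc (0 : ℝ) 1) (r m : ℕ) : 0 ≤ gTail r m x := by
  have h1x : 0 ≤ 1 - x := sub_nonneg.2 hx.2
  refine div_nonneg (sum_nonneg fun i hi => ?_) m.cast_nonneg
  have hi : (i : ℝ) + 1 ≤ r := by exact_mod_cast mem_range.1 hi
  have hcoeff : 0 ≤ (r : ℝ) - 1 - i := by linarith
  have hx0 := hx.1
  positivity

lemma gTail_le_sum {x : ℝ} (hx : x ∈ Set.Icc (0 : ℝ) 1) {r m : ℕ} (hr : r ≤ m) :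
    gTail r m x ≤ ∑ i ∈ range r, ((r : ℝ) - 1 - i) / (m - i) := by
  rw [gTail, sum_div]
  refine sum_le_sum fun i hi => ?_
  rw [mem_range] at hi
  obtain ⟨n, rfl⟩ := Nat.exists_eq_succ_of_ne_zero (by omega : m ≠ 0)
  have hcoeff : 0 ≤ (r : ℝ) - 1 - i := by
    have : (i : ℝ) + 1 ≤ r := by exact_mod_cast hi
    linarith
  have hpos : (0 : ℝ) < n + 1 - i := by
    have : (i : ℝ) ≤ n := by exact_mod_cast (by omega : i ≤ n)
    linarith
  have habs := cast_choose_mul_succ_eq n (by omega : i ≤ n + 1)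
  calc ((r : ℝ) - 1 - i) * (n + 1).choose i * x ^ (n + 1 - i - 1) * (1 - x) ^ i / (n + 1 : ℕ)
      = ((r : ℝ) - 1 - i) / (n + 1 - i) * ((1 - x) ^ i * x ^ (n - i) * n.choose i) := by
        rw [show n + 1 - i - 1 = n - i by omega]
        push_cast
        field_simp
        linear_combination -((r : ℝ) - 1 - i) * x ^ (n - i) * (1 - x) ^ i * habs
    _ ≤ ((r : ℝ) - 1 - i) / (n + 1 - i) :=
        mul_le_of_le_one_right (div_nonneg hcoeff hpos.le)
          (pow_mul_pow_mul_choose_le_one hx (by omega))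
    _ = ((r : ℝ) - 1 - i) / ((n + 1 : ℕ) - i) := by push_cast; ring

lemma tendsto_gTail_atTop_zero {x : ℝ} (hx : x ∈ Set.Icc (0 : ℝ) 1) (r : ℕ) :
    Tendsto (fun m => gTail r m x) atTop (𝓝 0) := by
  have hbound :
      Tendsto (fun m : ℕ => ∑ i ∈ range r, ((r : ℝ) - 1 - i) / (m - i)) atTop (𝓝 0) := by
    rw [← sum_const_zero (s := range r)]
    refine tendsto_finsetSum _ fun i _ => tendsto_const_nhds.div_atTop ?_
    simpa [sub_eq_add_neg] using
      tendsto_atTop_add_const_right _ (-(i : ℝ)) tendsto_natCast_atTop_atTop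
  exact tendsto_of_tendsto_of_tendsto_of_le_of_le' tendsto_const_nhds hbound
    (Eventually.of_forall (gTail_nonneg hx r))
    ((eventually_ge_atTop r).mono fun m hm => gTail_le_sum hx hm)

/-- For every integer `r ≥ 2` and every `x ∈ [0,1]`,
`∑_{k≥r} ((r-1)/(k(k-1))) · g_k^r(x) = 1`. -/
theorem G_xi_r_eq_one (r : ℕ) (hr : 2 ≤ r) (x : ℝ) (hx : x ∈ Set.Icc (0 : ℝ) 1) :
    ∑' k : ℕ, (if r ≤ k then ((r : ℝ) - 1) / ((k : ℝ) * ((k : ℝ) - 1)) * g r k x else 0)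
      = 1 := by
  set f : ℕ → ℝ := fun k =>
    if r ≤ k then ((r : ℝ) - 1) / ((k : ℝ) * ((k : ℝ) - 1)) * g r k x else 0
  have hf : ∀ k, 0 ≤ f k := by
    intro k
    by_cases hk : r ≤ k
    · have hr' : (1 : ℝ) ≤ r := by exact_mod_cast (by omega : 1 ≤ r)
      have hk' : (1 : ℝ) ≤ k := by exact_mod_cast (by omega : 1 ≤ k)
      simp only [f, if_pos hk]
      exact mul_nonneg (div_nonneg (by linarith) (mul_nonneg (by linarith) (by linarith)))
        (g_nonneg hx r k)
    · simp [f, hk]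
  refine ((hasSum_iff_tendsto_nat_of_nonneg hf 1).2 ?_).tsum_eq
  refine (tendsto_add_atTop_iff_nat 1).1 ?_
  have h := (tendsto_gTail_atTop_zero hx r).const_sub 1
  rw [sub_zero] at h
  exact h.congr' ((eventually_ge_atTop (r - 1)).mono fun m hm =>
    (sum_range_succ_eq_one_sub_gTail x hr hm).symm)
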